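/- arXiv:2302.04767 — 2 statements merged into one kernel-verified Lean document; each statement's English description precedes it below -/
import Mathlib

section
/- Let q = exp(2πik/n) with gcd(k,n) = 1, and let U, V be unitary operators on a finite-dimensional complex Hilbert space H with UV = qVU such that the only subspaces invariant under both U and V are 0 and H. Then dim H = n. -/
open scoped Real

theorem irreducible_qcommuting_pair_dim_eq
    {H : Type*} [NormedAddCommGroup H] [InnerProductSpace ℂ H]
    [FiniteDimensional ℂ H] [Nontrivial H]
    (k n : ℕ) (hk : 0 < k) (hn : 0 < n) (hkn : Nat.Coprime k n)
    (U V : H →L[ℂ] H)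
    (hU : U ∈ unitary (H →L[ℂ] H)) (hV : V ∈ unitary (H →L[ℂ] H))
    (hcomm : U * V = Complex.exp (2 * π * Complex.I * (k / n)) • (V * U))
    (hirr : ∀ W : Submodule ℂ H, (∀ w ∈ W, U w ∈ W) → (∀ w ∈ W, V w ∈ W) →
      W = ⊥ ∨ W = ⊤) :
    Module.finrank ℂ H = n := by
  classical
  set q : ℂ := Complex.exp (2 * π * Complex.I * (k / n)) with hq
  have hprim : IsPrimitiveRoot q n :=
    Complex.isPrimitiveRoot_exp_of_coprime k n hn.ne' hkn
  have hqn : q ^ n = 1 := hprim.pow_eq_one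
  -- injectivity of unitaries
  have hinj : ∀ T : H →L[ℂ] H, T ∈ unitary (H →L[ℂ] H) → Function.Injective T := by
    intro T hT x y hxy
    have h1 : star T * T = 1 := hT.1
    have : (star T * T) x = (star T * T) y := by
      simp only [ContinuousLinearMap.mul_apply, hxy]
    simpa [h1] using this
  -- pointwise commutation
  have hcomm' : ∀ x : H, U (V x) = q • V (U x) := by
    intro x
    have := congrArg (fun f : H →L[ℂ] H => f x) hcomm
    simpa using this
  have hpow : ∀ (m : ℕ) (x : H), U ((V ^ m) x) = q ^ m • (V ^ m) (U x) := by
    intro m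
    induction m with
    | zero => intro x; simp
    | succ m ih =>
      intro x
      rw [pow_succ]
      simp only [ContinuousLinearMap.mul_apply]
      rw [ih (V x), hcomm' x, map_smul, pow_succ, mul_smul]
  -- an eigenvalue of U
  set A : Module.End ℂ H := (U : H →ₗ[ℂ] H) with hA
  have hAapp : ∀ x : H, A x = U x := fun _ => rfl
  obtain ⟨μ0, hμ0⟩ := Module.End.exists_eigenvalue A
  set E : Submodule ℂ H := A.eigenspace μ0 with hE
  -- V^n preserves E
  have hVnE : ∀ x ∈ E, ((V ^ n : H →L[ℂ] H) : H →ₗ[ℂ] H) x ∈ E := by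
    intro x hx
    rw [hE, Module.End.mem_eigenspace_iff] at hx ⊢
    have h1 := hpow n x
    rw [hqn, one_smul] at h1
    show U ((V ^ n) x) = μ0 • (V ^ n) x
    rw [h1]
    rw [hAapp] at hx
    rw [hx, map_smul]
  -- eigenvector of restriction of V^n to E
  haveI : Nontrivial E := Submodule.nontrivial_iff_ne_bot.mpr hμ0
  set g : Module.End ℂ E := (((V ^ n : H →L[ℂ] H) : H →ₗ[ℂ] H)).restrict hVnE with hg
  obtain ⟨ν, hν⟩ := Module.End.exists_eigenvalue g
  obtain ⟨u, hu⟩ := hν.exists_hasEigenvector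
  set v : H := (u : H) with hv
  have hv0 : v ≠ 0 := by
    intro h
    exact hu.2 (ZeroMemClass.coe_eq_zero.mp h)
  have hvE : v ∈ E := u.2
  have hVnv : (V ^ n) v = ν • v := by
    have := congrArg (Subtype.val) hu.apply_eq_smul
    exact this
  have hUv : U v = μ0 • v := by
    have := (Module.End.mem_eigenspace_iff).mp hvE
    rwa [hAapp] at this
  have hμ0ne : μ0 ≠ 0 := by
    intro h
    apply hv0
    apply hinj U hU
    rw [hUv, h, zero_smul, map_zero]
  -- the family of eigenvectors
  set w : Fin n → H := fun j => (V ^ (j : ℕ)) v with hw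
  have hUw : ∀ j : Fin n, U (w j) = (q ^ (j : ℕ) * μ0) • w j := by
    intro j
    rw [hw]
    simp only
    rw [hpow, hUv, map_smul, smul_smul]
  have hw0 : ∀ j : Fin n, w j ≠ 0 := by
    intro j h
    apply hv0
    apply hinj (V ^ (j : ℕ)) (pow_mem hV _)
    rw [map_zero]
    exact h
  have heig : ∀ j : Fin n, A.HasEigenvector (q ^ (j : ℕ) * μ0) (w j) := by
    intro j
    refine ⟨?_, hw0 j⟩
    rw [Module.End.mem_eigenspace_iff, hAapp, hUw]
  have hinjμ : Function.Injective (fun j : Fin n => q ^ (j : ℕ) * μ0) := by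
    intro i j hij
    simp only [mul_left_inj' hμ0ne] at hij
    exact Fin.ext (hprim.pow_inj i.2 j.2 hij)
  have hLI : LinearIndependent ℂ w :=
    A.eigenvectors_linearIndependent' _ hinjμ w heig
  have hge : n ≤ Module.finrank ℂ H := by
    simpa using hLI.fintype_card_le_finrank
  -- the span is invariant
  set W : Submodule ℂ H := Submodule.span ℂ (Set.range w) with hW
  have hwW : ∀ j : Fin n, w j ∈ W := fun j => Submodule.subset_span ⟨j, rfl⟩
  have hUW : ∀ x ∈ W, U x ∈ W := by
    have hle : W ≤ Submodule.comap (U : H →ₗ[ℂ] H) W := by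
      rw [hW, Submodule.span_le]
      rintro _ ⟨j, rfl⟩
      simp only [SetLike.mem_coe, Submodule.mem_comap]
      show U (w j) ∈ W
      rw [hUw]
      exact W.smul_mem _ (hwW j)
    intro x hx
    exact hle hx
  have hVW : ∀ x ∈ W, V x ∈ W := by
    have hle : W ≤ Submodule.comap (V : H →ₗ[ℂ] H) W := by
      rw [hW, Submodule.span_le]
      rintro _ ⟨j, rfl⟩
      simp only [SetLike.mem_coe, Submodule.mem_comap]
      show V (w j) ∈ W
      have hstep : V (w j) = (V ^ ((j : ℕ) + 1)) v := by
        rw [hw]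
        simp only
        rw [pow_succ']
        rfl
      rcases lt_or_eq_of_le (Nat.succ_le_of_lt j.2) with hlt | heq
      · rw [hstep]
        exact hwW ⟨(j : ℕ) + 1, hlt⟩
      · rw [hstep, show ((j : ℕ) + 1) = n from heq, hVnv]
        have : v = w ⟨0, hn⟩ := by simp [hw]
        rw [this]
        exact W.smul_mem _ (hwW _)
    intro x hx
    exact hle hx
  have hWtop : W = ⊤ := by
    rcases hirr W hUW hVW with h | h
    · exfalso
      apply hw0 ⟨0, hn⟩
      rw [← Submodule.mem_bot (R := ℂ), ← h]
      exact hwW ⟨0, hn⟩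
    · exact h
  have hle : Module.finrank ℂ H ≤ n := by
    have h1 : Module.finrank ℂ (⊤ : Submodule ℂ H) = Module.finrank ℂ H :=
      finrank_top ℂ H
    rw [← h1, ← hWtop]
    have := finrank_range_le_card (R := ℂ) w
    simp only [Fintype.card_fin] at this
    exact this
  omega
end

section
/- For n ≥ 1 and a ∈ M_N(ℂ) with N > n, the map φ(a) = n·tr(a)·I_N − a is n-positive but not (n+1)-positive; in particular, for every n there exist n-positive maps on matrix algebras that are not completely positive. -/
open scoped ComplexOrder

/-- The `n`-th matrix amplification of a linear map on `M_N(ℂ)`, acting on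
`M_n(M_N(ℂ)) ≅ M_{n·N}(ℂ)` (indexed by `Fin n × Fin N`) blockwise. -/
def matrixAmplification (N n : ℕ)
    (φ : Matrix (Fin N) (Fin N) ℂ →ₗ[ℂ] Matrix (Fin N) (Fin N) ℂ)
    (B : Matrix (Fin n × Fin N) (Fin n × Fin N) ℂ) :
    Matrix (Fin n × Fin N) (Fin n × Fin N) ℂ :=
  Matrix.of fun p q => φ (Matrix.of fun a b => B (p.1, a) (q.1, b)) p.2 q.2

/-- A linear map on `M_N(ℂ)` is `n`-positive if its `n`-th amplification
preserves positive semidefiniteness. -/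
def IsNPositive (N n : ℕ)
    (φ : Matrix (Fin N) (Fin N) ℂ →ₗ[ℂ] Matrix (Fin N) (Fin N) ℂ) : Prop :=
  ∀ B : Matrix (Fin n × Fin N) (Fin n × Fin N) ℂ,
    B.PosSemidef → (matrixAmplification N n φ B).PosSemidef

/-- The map `a ↦ n·tr(a)·1 - a` on `M_N(ℂ)`. -/
noncomputable def tomiyamaMap (N n : ℕ) :
    Matrix (Fin N) (Fin N) ℂ →ₗ[ℂ] Matrix (Fin N) (Fin N) ℂ :=
  (n : ℂ) • ((Matrix.traceLinearMap (Fin N) ℂ ℂ).smulRight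
      (1 : Matrix (Fin N) (Fin N) ℂ)) - LinearMap.id

open Matrix Complex


/-- |∑ c i|² ≤ n ∑ |c i|². -/
lemma normSq_sum_le (n : ℕ) (c : Fin n → ℂ) :
    Complex.normSq (∑ i, c i) ≤ n * ∑ i, Complex.normSq (c i) := by
  have h1 : (‖·‖) (∑ i, c i) ≤ ∑ i, (‖·‖) (c i) := by
    simpa using norm_sum_le Finset.univ c
  have h2 : (∑ i, (‖·‖) (c i)) ^ 2 ≤ n * ∑ i, (‖·‖) (c i) ^ 2 := by
    simpa using sq_sum_le_card_mul_sum_sq (s := (Finset.univ : Finset (Fin n)))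
      (f := fun i => (‖·‖) (c i))
  calc Complex.normSq (∑ i, c i) = (‖·‖) (∑ i, c i) ^ 2 := (Complex.sq_norm _).symm
    _ ≤ (∑ i, (‖·‖) (c i)) ^ 2 := by
        apply pow_le_pow_left₀ (norm_nonneg _) h1
    _ ≤ n * ∑ i, (‖·‖) (c i) ^ 2 := h2
    _ = n * ∑ i, Complex.normSq (c i) := by simp [Complex.sq_norm]

/-- Cauchy–Schwarz for complex sums, normSq form. -/
lemma normSq_sum_mul_le {ι : Type*} [Fintype ι] (f g : ι → ℂ) :
    Complex.normSq (∑ a, f a * g a) ≤ (∑ a, Complex.normSq (f a)) * (∑ a, Complex.normSq (g a)) := by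
  have h1 : (‖·‖) (∑ a, f a * g a) ≤ ∑ a, (‖·‖) (f a) * (‖·‖) (g a) := by
    simpa [_root_.map_mul] using norm_sum_le Finset.univ (fun a => f a * g a)
  have h2 := Finset.sum_mul_sq_le_sq_mul_sq Finset.univ (fun a => (‖·‖) (f a))
      (fun a => (‖·‖) (g a))
  calc Complex.normSq (∑ a, f a * g a) = (‖·‖) (∑ a, f a * g a) ^ 2 := (Complex.sq_norm _).symm
    _ ≤ (∑ a, (‖·‖) (f a) * (‖·‖) (g a)) ^ 2 := by
        apply pow_le_pow_left₀ (norm_nonneg _) h1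
    _ ≤ (∑ a, (‖·‖) (f a) ^ 2) * (∑ a, (‖·‖) (g a) ^ 2) := h2
    _ = _ := by simp [Complex.sq_norm]

lemma core_ineq (n N : ℕ) (V X : Matrix (Fin n) (Fin N) ℂ) :
    Complex.normSq (Vᴴ * X).trace ≤ n * ∑ a, ∑ b, Complex.normSq ((Vᴴ * X) a b) := by
  have hH : (V * Vᴴ).PosSemidef := Matrix.posSemidef_self_mul_conjTranspose V
  have hHer : (V * Vᴴ).IsHermitian := hH.1
  set U : Matrix (Fin n) (Fin n) ℂ := (hHer.eigenvectorUnitary : Matrix (Fin n) (Fin n) ℂ) with hU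
  have hU1 : U * star U = 1 := (Matrix.mem_unitaryGroup_iff).mp hHer.eigenvectorUnitary.2
  have hU2 : star U * U = 1 := (Matrix.mem_unitaryGroup_iff').mp hHer.eigenvectorUnitary.2
  set lam := hHer.eigenvalues with hlam
  set W : Matrix (Fin N) (Fin n) ℂ := Vᴴ * U with hW
  set Y : Matrix (Fin n) (Fin N) ℂ := star U * X with hY
  have hWY : Vᴴ * X = W * Y := by
    rw [hW, hY, Matrix.mul_assoc, ← Matrix.mul_assoc U, hU1, Matrix.one_mul]
  have hdiag : Wᴴ * W = Matrix.diagonal (fun i => (lam i : ℂ)) := by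
    have hspec := hHer.spectral_theorem
    rw [Unitary.conjStarAlgAut_apply] at hspec
    rw [hW, Matrix.conjTranspose_mul, ← Matrix.star_eq_conjTranspose U,
      Matrix.conjTranspose_conjTranspose]
    calc Uᴴ * V * (Vᴴ * U) = star U * (V * Vᴴ) * U := by
          rw [Matrix.star_eq_conjTranspose, Matrix.mul_assoc, Matrix.mul_assoc, Matrix.mul_assoc]
      _ = star U * (U * Matrix.diagonal (RCLike.ofReal ∘ lam) * star U) * U := by rw [← hspec]
      _ = Matrix.diagonal (fun i => (lam i : ℂ)) := by
          rw [Matrix.mul_assoc, Matrix.mul_assoc, hU2, Matrix.mul_one, ← Matrix.mul_assoc, hU2,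
            Matrix.one_mul]
          rfl
  have hlamcol : ∀ i, ∑ a, Complex.normSq (W a i) = lam i := by
    intro i
    have h := congrFun (congrFun hdiag i) i
    simp only [Matrix.mul_apply, Matrix.conjTranspose_apply, Matrix.diagonal_apply_eq] at h
    have h2 : ∑ a, (Complex.normSq (W a i) : ℂ) = (lam i : ℂ) := by
      rw [← h]
      refine Finset.sum_congr rfl fun a _ => ?_
      rw [Complex.normSq_eq_conj_mul_self]; rfl
    exact_mod_cast h2
  have htrace : (Vᴴ * X).trace = ∑ i, ∑ a, Y i a * W a i := by
    rw [hWY, Matrix.trace_mul_comm]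
    simp [Matrix.trace, Matrix.diag, Matrix.mul_apply]
  have e1 : (W * Y)ᴴ * (W * Y) = Yᴴ * Matrix.diagonal (fun i => (lam i : ℂ)) * Y := by
    rw [Matrix.conjTranspose_mul, Matrix.mul_assoc, ← Matrix.mul_assoc Wᴴ, hdiag,
      ← Matrix.mul_assoc]
  have hent : ∀ b, ∑ a, (Complex.normSq ((W * Y) a b) : ℂ)
      = ∑ i, (Complex.normSq (Y i b) : ℂ) * (lam i : ℂ) := by
    intro b
    have h := congrFun (congrFun e1 b) b
    simp only [Matrix.mul_apply, Matrix.conjTranspose_apply, Matrix.diagonal_apply, ite_mul,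
      zero_mul, mul_ite, mul_zero, Finset.sum_ite_eq, Finset.sum_ite_eq', Finset.mem_univ,
      if_true] at h
    calc ∑ a, (Complex.normSq ((W * Y) a b) : ℂ)
        = ∑ a, star ((W * Y) a b) * (W * Y) a b := by
          refine Finset.sum_congr rfl fun a _ => ?_
          rw [Complex.normSq_eq_conj_mul_self]; rfl
      _ = ∑ i, star (Y i b) * (lam i : ℂ) * Y i b := by
          simp only [Matrix.mul_apply]
          exact h
      _ = ∑ i, (Complex.normSq (Y i b) : ℂ) * (lam i : ℂ) := by
          refine Finset.sum_congr rfl fun i _ => ?_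
          rw [Complex.normSq_eq_conj_mul_self]
          simp only [Complex.star_def]
          ring
  have hC : (∑ a, ∑ b, Complex.normSq ((Vᴴ * X) a b))
      = ∑ i, (∑ b, Complex.normSq (Y i b)) * lam i := by
    have h2 : (↑(∑ a, ∑ b, Complex.normSq ((Vᴴ * X) a b)) : ℂ)
        = (↑(∑ i, (∑ b, Complex.normSq (Y i b)) * lam i) : ℂ) := by
      push_cast
      rw [hWY]
      calc ∑ a, ∑ b, (Complex.normSq ((W * Y) a b) : ℂ)
          = ∑ b, ∑ a, (Complex.normSq ((W * Y) a b) : ℂ) := Finset.sum_comm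
        _ = ∑ b, ∑ i, (Complex.normSq (Y i b) : ℂ) * (lam i : ℂ) :=
            Finset.sum_congr rfl fun b _ => hent b
        _ = ∑ i, (∑ b, (Complex.normSq (Y i b) : ℂ)) * (lam i : ℂ) := by
            rw [Finset.sum_comm]
            exact Finset.sum_congr rfl fun i _ => (Finset.sum_mul ..).symm
    exact_mod_cast h2
  calc Complex.normSq (Vᴴ * X).trace
      = Complex.normSq (∑ i, ∑ a, Y i a * W a i) := by rw [htrace]
    _ ≤ n * ∑ i, Complex.normSq (∑ a, Y i a * W a i) := normSq_sum_le n _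
    _ ≤ n * ∑ i, (∑ a, Complex.normSq (Y i a)) * (∑ a, Complex.normSq (W a i)) := by
        refine mul_le_mul_of_nonneg_left (Finset.sum_le_sum fun i _ => ?_) (by positivity)
        exact normSq_sum_mul_le _ _
    _ = n * ∑ i, (∑ a, Complex.normSq (Y i a)) * lam i := by
        refine congrArg _ (Finset.sum_congr rfl fun i _ => ?_)
        rw [hlamcol]
    _ = n * ∑ a, ∑ b, Complex.normSq ((Vᴴ * X) a b) := by rw [hC]

lemma trace_conjTranspose_mul_self' {α β : Type*} [Fintype α] [Fintype β] [DecidableEq β]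
    (M : Matrix α β ℂ) :
    (Mᴴ * M).trace = ∑ a, ∑ b, (Complex.normSq (M a b) : ℂ) := by
  rw [Finset.sum_comm]
  simp only [Matrix.trace, Matrix.diag, Matrix.mul_apply, Matrix.conjTranspose_apply]
  refine Finset.sum_congr rfl fun b _ => Finset.sum_congr rfl fun a _ => ?_
  rw [Complex.normSq_eq_conj_mul_self]; rfl

section amp
variable (m n N : ℕ) (B : Matrix (Fin m × Fin N) (Fin m × Fin N) ℂ)

lemma amp_eq :
    matrixAmplification N m (tomiyamaMap N n) B
      = (Matrix.of fun P Q => (n : ℂ) * (∑ c, B (P.1, c) (Q.1, c))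
          * (if P.2 = Q.2 then (1:ℂ) else 0) - B P Q) := by
  ext P Q
  simp [matrixAmplification, tomiyamaMap, Matrix.one_apply, Matrix.trace, Matrix.diag,
    mul_assoc]

end amp

open scoped MatrixOrder Matrix.Norms.L2Operator in
lemma exists_eq_conjTranspose_mul_self_of_posSemidef {ι : Type*} [Fintype ι] [DecidableEq ι]
    (B : Matrix ι ι ℂ) (hB : B.PosSemidef) : ∃ D : Matrix ι ι ℂ, B = Dᴴ * D := by
  obtain ⟨D, hD⟩ := CStarAlgebra.nonneg_iff_eq_star_mul_self.mp hB.nonneg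
  rw [Matrix.star_eq_conjTranspose] at hD
  exact ⟨D, hD⟩

lemma tomiyama_n_positive (n N : ℕ) : IsNPositive N n (tomiyamaMap N n) := by
  intro B hB
  obtain ⟨D, hD⟩ := exists_eq_conjTranspose_mul_self_of_posSemidef B hB
  have hBapp : ∀ P Q, star (B Q P) = B P Q := fun P Q => by
    rw [← Matrix.conjTranspose_apply, hB.1]
  rw [Matrix.posSemidef_iff_dotProduct_mulVec]
  constructor
  · -- Hermitian
    rw [amp_eq]
    show _ᴴ = _
    ext P Q
    simp only [Matrix.conjTranspose_apply, Matrix.of_apply, star_sub, star_mul', star_sum,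
      hBapp, star_natCast, apply_ite (star : ℂ → ℂ), star_one, star_zero]
    rw [if_congr (Iff.intro Eq.symm Eq.symm) rfl rfl]
  · intro x
    rw [amp_eq]
    set X : Matrix (Fin n) (Fin N) ℂ := Matrix.of fun p a => x (p, a) with hX
    set V : (Fin n × Fin N) → Matrix (Fin n) (Fin N) ℂ :=
      fun K => Matrix.of fun p c => star (D K (p, c)) with hV
    set T : Matrix (Fin n) (Fin n) ℂ := Matrix.of fun p q => ∑ c, B (p, c) (q, c) with hT0
    set M1 : Matrix (Fin n × Fin N) (Fin n × Fin N) ℂ :=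
      Matrix.of fun P Q => (n : ℂ) * (∑ c, B (P.1, c) (Q.1, c))
        * (if P.2 = Q.2 then (1:ℂ) else 0) with hM1
    have hsplit : (Matrix.of fun P Q => (n : ℂ) * (∑ c, B (P.1, c) (Q.1, c))
        * (if P.2 = Q.2 then (1:ℂ) else 0) - B P Q) = M1 - B := rfl
    rw [hsplit, Matrix.sub_mulVec, dotProduct_sub]
    have hT : ∑ K, V K * (V K)ᴴ = T := by
      ext p q
      simp only [Matrix.sum_apply, Matrix.mul_apply, Matrix.conjTranspose_apply, hV,
        Matrix.of_apply, star_star, hT0, hD, Matrix.mul_apply]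
      rw [Finset.sum_comm]
    have hdK : ∀ K, ((V K)ᴴ * X).trace = (D *ᵥ x) K := by
      intro K
      simp only [Matrix.trace, Matrix.diag, Matrix.mul_apply, Matrix.conjTranspose_apply, hV, hX,
        Matrix.of_apply, star_star, Matrix.mulVec, dotProduct]
      rw [Fintype.sum_prod_type, Finset.sum_comm]
    have hTerm2 : star x ⬝ᵥ B *ᵥ x = ∑ K, (Complex.normSq (((V K)ᴴ * X).trace) : ℂ) := by
      rw [hD, ← Matrix.mulVec_mulVec, Matrix.dotProduct_mulVec, Matrix.vecMul_conjTranspose,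
        star_star]
      simp only [dotProduct, Pi.star_apply]
      refine Finset.sum_congr rfl fun K _ => ?_
      rw [hdK, Complex.normSq_eq_conj_mul_self]; rfl
    have hTrace : (Xᴴ * T * X).trace = ∑ K, ∑ a, ∑ b, (Complex.normSq (((V K)ᴴ * X) a b) : ℂ) := by
      rw [← hT, Matrix.mul_sum, Matrix.sum_mul, Matrix.trace_sum]
      refine Finset.sum_congr rfl fun K _ => ?_
      rw [← trace_conjTranspose_mul_self']
      congr 1
      rw [Matrix.conjTranspose_mul, Matrix.conjTranspose_conjTranspose]
      simp only [Matrix.mul_assoc]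
    have hTerm1 : star x ⬝ᵥ M1 *ᵥ x = (n:ℂ) * (Xᴴ * T * X).trace := by
      have lhs_eq : star x ⬝ᵥ M1 *ᵥ x
          = ∑ p, ∑ b, ∑ q, (n:ℂ) * (star (x (p,b)) * (T p q * x (q,b))) := by
        simp only [dotProduct, Matrix.mulVec, Pi.star_apply, hM1, Matrix.of_apply]
        rw [Fintype.sum_prod_type]
        refine Finset.sum_congr rfl fun p _ => Finset.sum_congr rfl fun b _ => ?_
        rw [Fintype.sum_prod_type, Finset.mul_sum]
        refine Finset.sum_congr rfl fun q _ => ?_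
        simp only [mul_ite, mul_one, mul_zero, ite_mul, zero_mul, Finset.sum_ite_eq,
          Finset.mem_univ, if_true]
        rw [hT0]
        simp only [Matrix.of_apply]
        ring
      have rhs_eq : (Xᴴ * T * X).trace
          = ∑ b, ∑ q, ∑ p, star (x (p,b)) * (T p q * x (q,b)) := by
        simp only [Matrix.trace, Matrix.diag, Matrix.mul_apply, Matrix.conjTranspose_apply, hX,
          Matrix.of_apply, Finset.sum_mul]
        refine Finset.sum_congr rfl fun b _ => Finset.sum_congr rfl fun q _ =>
          Finset.sum_congr rfl fun p _ => ?_
        ring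
      rw [lhs_eq, rhs_eq, Finset.mul_sum]
      rw [Finset.sum_comm]
      refine Finset.sum_congr rfl fun b _ => ?_
      rw [Finset.sum_comm, Finset.mul_sum]
      refine Finset.sum_congr rfl fun q _ => ?_
      rw [Finset.mul_sum]
    have hR : (0:ℝ) ≤ ∑ K, ((n:ℝ) * ∑ a, ∑ b, Complex.normSq (((V K)ᴴ * X) a b)
        - Complex.normSq (((V K)ᴴ * X).trace)) := by
      refine Finset.sum_nonneg fun K _ => sub_nonneg.mpr ?_
      exact core_ineq n N (V K) X
    have key : star x ⬝ᵥ M1 *ᵥ x - star x ⬝ᵥ B *ᵥ x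
        = ((∑ K, ((n:ℝ) * ∑ a, ∑ b, Complex.normSq (((V K)ᴴ * X) a b)
            - Complex.normSq (((V K)ᴴ * X).trace)) : ℝ) : ℂ) := by
      rw [hTerm1, hTrace, hTerm2]
      push_cast
      rw [Finset.mul_sum, ← Finset.sum_sub_distrib]
    rw [key]
    exact_mod_cast hR

lemma tomiyama_not_succ (n N : ℕ) (hN : n < N) :
    ¬ IsNPositive N (n + 1) (tomiyamaMap N n) := by
  intro h
  have hle : n + 1 ≤ N := hN
  set ι : Fin (n+1) → Fin N := Fin.castLE hle with hι
  set v : Fin (n+1) × Fin N → ℂ := fun P => if ι P.1 = P.2 then 1 else 0 with hv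
  set B : Matrix (Fin (n+1) × Fin N) (Fin (n+1) × Fin N) ℂ :=
    Matrix.of fun P Q => v P * star (v Q) with hB
  have hvsq : ∀ P, star (v P) * v P = v P := by
    intro P
    by_cases hc : ι P.1 = P.2 <;> simp [hv, hc]
  have hv2 : ∑ P, star (v P) * v P = ((n:ℂ) + 1) := by
    have : ∑ P, star (v P) * v P = ∑ P, v P := Finset.sum_congr rfl fun P _ => hvsq P
    rw [this, Fintype.sum_prod_type]
    simp [hv, Finset.sum_ite_eq, Finset.mem_univ]
  have hBpsd : B.PosSemidef := by
    rw [Matrix.posSemidef_iff_dotProduct_mulVec]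
    constructor
    · show _ᴴ = _
      ext P Q
      simp only [Matrix.conjTranspose_apply, hB, Matrix.of_apply, star_mul', star_star]
      ring
    · intro x
      have : star x ⬝ᵥ B *ᵥ x
          = (∑ P, star (x P) * v P) * (∑ Q, star (v Q) * x Q) := by
        rw [Finset.sum_mul_sum]
        simp only [dotProduct, Matrix.mulVec, Pi.star_apply, hB, Matrix.of_apply,
          Finset.mul_sum]
        refine Finset.sum_congr rfl fun P _ => Finset.sum_congr rfl fun Q _ => ?_
        ring
      rw [this]
      have hstar : ∑ P, star (x P) * v P = star (∑ Q, star (v Q) * x Q) := by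
        rw [star_sum]
        refine Finset.sum_congr rfl fun P _ => ?_
        rw [StarMul.star_mul, star_star]
      rw [hstar]
      exact star_mul_self_nonneg _
  have hpos := (h B hBpsd).dotProduct_mulVec_nonneg v
  rw [amp_eq] at hpos
  have hTv : ∀ p q : Fin (n+1), (∑ c, B ((p, c) : Fin (n+1) × Fin N) (q, c))
      = if p = q then (1:ℂ) else 0 := by
    intro p q
    simp only [hB, Matrix.of_apply, hv]
    simp only [apply_ite (star : ℂ → ℂ), star_one, star_zero, ite_mul, one_mul, zero_mul,
      mul_ite, mul_one, mul_zero]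
    rw [Finset.sum_ite_eq]
    simp [hι, Fin.castLE_inj]
  have hval : star v ⬝ᵥ (Matrix.of fun P Q => (n : ℂ) * (∑ c, B (P.1, c) (Q.1, c))
        * (if P.2 = Q.2 then (1:ℂ) else 0) - B P Q) *ᵥ v
      = (n:ℂ) * ((n:ℂ)+1) - ((n:ℂ)+1)^2 := by
    have hsplit : (Matrix.of fun P Q => ((n : ℂ) * (∑ c, B (P.1, c) (Q.1, c))
        * (if P.2 = Q.2 then (1:ℂ) else 0) - B P Q))
        = (Matrix.of fun P Q => (n : ℂ) * (∑ c, B (P.1, c) (Q.1, c))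
          * (if P.2 = Q.2 then (1:ℂ) else 0)) - B := rfl
    rw [hsplit, Matrix.sub_mulVec, dotProduct_sub]
    have p1 : star v ⬝ᵥ (Matrix.of fun P Q => (n : ℂ) * (∑ c, B (P.1, c) (Q.1, c))
        * (if P.2 = Q.2 then (1:ℂ) else 0)) *ᵥ v = (n:ℂ) * ((n:ℂ)+1) := by
      simp only [dotProduct, Matrix.mulVec, Pi.star_apply, Matrix.of_apply]
      have inner : ∀ P : Fin (n+1) × Fin N,
          (∑ Q : Fin (n+1) × Fin N, ((n : ℂ) * (∑ c, B (P.1, c) (Q.1, c))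
            * (if P.2 = Q.2 then (1:ℂ) else 0)) * v Q) = (n:ℂ) * v P := by
        intro P
        rw [Fintype.sum_prod_type]
        have : ∀ q : Fin (n+1), (∑ b : Fin N, ((n : ℂ) * (∑ c, B (P.1, c) (q, c))
            * (if P.2 = b then (1:ℂ) else 0)) * v (q, b))
            = (n : ℂ) * (if P.1 = q then (1:ℂ) else 0) * v (q, P.2) := by
          intro q
          rw [hTv]
          simp only [mul_ite, mul_one, mul_zero, ite_mul, zero_mul, Finset.sum_ite_eq,
            Finset.mem_univ, if_true]
        rw [Finset.sum_congr rfl fun q _ => this q]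
        simp only [mul_ite, mul_one, mul_zero, ite_mul, zero_mul, Finset.sum_ite_eq,
          Finset.mem_univ, if_true]
      rw [Finset.sum_congr rfl fun P _ => congrArg _ (inner P)]
      have : ∑ P, star (v P) * ((n:ℂ) * v P) = (n:ℂ) * ∑ P, star (v P) * v P := by
        rw [Finset.mul_sum]
        exact Finset.sum_congr rfl fun P _ => by ring
      rw [this, hv2]
    have p2 : star v ⬝ᵥ B *ᵥ v = ((n:ℂ)+1)^2 := by
      have : star v ⬝ᵥ B *ᵥ v
          = (∑ P, star (v P) * v P) * (∑ Q, star (v Q) * v Q) := by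
        rw [Finset.sum_mul_sum]
        simp only [dotProduct, Matrix.mulVec, Pi.star_apply, hB, Matrix.of_apply,
          Finset.mul_sum]
        refine Finset.sum_congr rfl fun P _ => Finset.sum_congr rfl fun Q _ => ?_
        have : star (v Q) * v Q = v Q * star (v Q) := by ring
        ring
      rw [this, hv2]; ring
    rw [p1, p2]
  rw [hval] at hpos
  have hreal : ((0:ℝ):ℂ) ≤ (((n:ℝ) * ((n:ℝ)+1) - ((n:ℝ)+1)^2 : ℝ) : ℂ) := by
    push_cast
    exact_mod_cast hpos
  rw [Complex.real_le_real] at hreal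
  nlinarith [hreal]

theorem tomiyama_map_n_positive_not_succ_positive
    (n N : ℕ) (hn : 1 ≤ n) (hN : n < N) :
    IsNPositive N n (tomiyamaMap N n) ∧
      ¬ IsNPositive N (n + 1) (tomiyamaMap N n) ∧
      ¬ (∀ m : ℕ, IsNPositive N m (tomiyamaMap N n)) := by
  refine ⟨tomiyama_n_positive n N, tomiyama_not_succ n N hN, fun hall => ?_⟩
  exact tomiyama_not_succ n N hN (hall (n + 1))
end
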